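/- For every odd integer j ≥ 1 and all even integers a, b with 2 ≤ a ≤ b, the rooted tree RT(0^j, a, b) is super edge-graceful. -/

import Mathlib

/-- Edge type of the rooted tree `RT(a₀, …, a_{n-1})`: one edge from the root to each
child `i` (`Sum.inl i`), and one edge from child `i` to each of its `a i` leaf children
(`Sum.inr ⟨i, m⟩`).  The number of edges is `q = n + ∑ i, a i`. -/
abbrev RTEdge (n : ℕ) (a : Fin n → ℕ) := (Fin n) ⊕ (Σ i : Fin n, Fin (a i))

/-- Vertex type of the rooted tree `RT(a₀, …, a_{n-1})`: the root (`none`), the children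
`some (.inl i)` of the root, and the leaves `some (.inr ⟨i, m⟩)` attached to child `i`.
The number of vertices is `p = q + 1`. -/
abbrev RTVertex (n : ℕ) (a : Fin n → ℕ) := Option (RTEdge n a)

/-- The vertex labeling induced by an edge labeling `f`: each vertex gets the sum of the
labels of the edges incident with it. -/
def vertexSum {n : ℕ} (a : Fin n → ℕ) (f : RTEdge n a → ℤ) : RTVertex n a → ℤ
  | none => ∑ i : Fin n, f (Sum.inl i)
  | some (Sum.inl i) => f (Sum.inl i) + ∑ m : Fin (a i), f (Sum.inr ⟨i, m⟩)
  | some (Sum.inr ⟨i, m⟩) => f (Sum.inr ⟨i, m⟩)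

/-- The target label set for `q` objects: `{0, ±1, …, ±(q-1)/2}` if `q` is odd, and
`{±1, …, ±(q/2)}` if `q` is even. -/
noncomputable def segSet (q : ℕ) : Finset ℤ :=
  if q % 2 = 0 then (Finset.Icc (-((q / 2 : ℕ) : ℤ)) ((q / 2 : ℕ) : ℤ)).erase 0
  else Finset.Icc (-((q / 2 : ℕ) : ℤ)) ((q / 2 : ℕ) : ℤ)

/-- The rooted tree `RT(a₀, …, a_{n-1})` is super edge-graceful: there is an edge
labeling which is a bijection onto `{0, ±1, …, ±(q-1)/2}` (`q` odd) resp.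
`{±1, …, ±(q/2)}` (`q` even) whose induced vertex labeling is a bijection onto
`{0, ±1, …, ±(p-1)/2}` (`p` odd) resp. `{±1, …, ±(p/2)}` (`p` even), where
`q = n + ∑ i, a i` and `p = q + 1`. -/
def IsSEG {n : ℕ} (a : Fin n → ℕ) : Prop :=
  ∃ f : RTEdge n a → ℤ,
    Set.BijOn f Set.univ ↑(segSet (n + ∑ i, a i)) ∧
    Set.BijOn (vertexSum a f) Set.univ ↑(segSet (n + ∑ i, a i + 1))

/-- The sequence `(0^j, a, b)` of length `j + 2`. -/
def seq2 (j a b : ℕ) : Fin (j + 2) → ℕ :=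
  fun i => if (i : ℕ) < j then 0 else if (i : ℕ) = j then a else b

/-!
Write `j = 2c + 1`, `a = 2A`, `b = 2B` and `K = c + A + B + 1`, so that there are `2K + 1`
edges. Label the vertices by: the root `-(K + 1)`, the child with `a` leaves `K + 1`, the child
with `b` leaves `-K`, the leafless children `-1, ±(A + B + 1), …, ±(A + B + c)`, the leaves of
the `a`-child `K, 1, ±2, …, ±A`, and the leaves of the `b`-child `±(A + 1), …, ±(A + B)`; these
are exactly `±1, …, ±(K + 1)`. Give every edge the label of its lower endpoint, except the edge
to the `a`-child, which gets `0`: the edge labels are then exactly `0, ±1, …, ±K`. The ± pairs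
cancel in every vertex sum, which leaves `-1 + 0 - K` at the root, `0 + K + 1` at the `a`-child
and `-K + 0` at the `b`-child.
-/

open Finset

theorem card_segSet (q : ℕ) : #(segSet q) = q := by
  unfold segSet
  split_ifs
  · rw [card_erase_of_mem (by simp; omega), Int.card_Icc]; omega
  · rw [Int.card_Icc]; omega

theorem mem_segSet_iff {q : ℕ} {x : ℤ} :
    x ∈ segSet q ↔ (q % 2 = 0 → x ≠ 0) ∧ |x| ≤ (q / 2 : ℕ) := by
  unfold segSet
  split_ifs with hq <;> simp [abs_le, hq, and_comm]

theorem card_rtEdge {n : ℕ} (a : Fin n → ℕ) : Fintype.card (RTEdge n a) = n + ∑ i, a i := by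
  simp

theorem Set.bijOn_univ_of_injective {X β : Type*} [Fintype X] {f : X → β} {t : Finset β}
    (hf : Function.Injective f) (hmaps : ∀ x, f x ∈ t) (hcard : #t ≤ Fintype.card X) :
    Set.BijOn f Set.univ t := by
  rw [← coe_univ]
  exact ⟨fun x _ ↦ hmaps x, hf.injOn,
    surjOn_of_injOn_of_card_le f (fun x _ ↦ hmaps x) hf.injOn hcard⟩

theorem isSEG_of_injective {n : ℕ} {a : Fin n → ℕ} {f : RTEdge n a → ℤ}
    (hf : Function.Injective f) (hf_mem : ∀ e, f e ∈ segSet (n + ∑ i, a i))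
    (hv : Function.Injective (vertexSum a f))
    (hv_mem : ∀ v, vertexSum a f v ∈ segSet (n + ∑ i, a i + 1)) : IsSEG a :=
  ⟨f, Set.bijOn_univ_of_injective hf hf_mem (by rw [card_segSet, card_rtEdge]),
    Set.bijOn_univ_of_injective hv hv_mem (by simp [card_segSet])⟩

theorem Function.Injective.update_of_forall_ne {α β : Type*} [DecidableEq α] {f : α → β}
    (hf : Function.Injective f) (x₀ : α) {c : β} (hc : ∀ x, f x ≠ c) :
    Function.Injective (Function.update f x₀ c) := by
  intro x y h
  by_cases hx : x = x₀ <;> by_cases hy : y = x₀ <;>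
    simp only [Function.update_apply, hx, hy, if_true, if_false] at h
  · exact hx.trans hy.symm
  · exact absurd h.symm (hc y)
  · exact absurd h (hc x)
  · exact hf h

theorem Sigma.fin_mk_inj_iff {n : ℕ} {a : Fin n → ℕ} {i i' : Fin n} {m : Fin (a i)}
    {m' : Fin (a i')} :
    (⟨i, m⟩ : Σ i, Fin (a i)) = ⟨i', m'⟩ ↔ (i : ℕ) = i' ∧ (m : ℕ) = m' := by
  constructor
  · rintro ⟨⟩; exact ⟨rfl, rfl⟩
  · rintro ⟨hi, hm⟩
    obtain rfl := Fin.ext hi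
    rw [Fin.ext hm]

def zigzag (s m : ℕ) : ℤ := if m % 2 = 0 then ((s + m / 2 : ℕ) : ℤ) else -((s + m / 2 : ℕ) : ℤ)

theorem sum_range_zigzag (s B : ℕ) : ∑ m ∈ range (2 * B), zigzag s m = 0 := by
  induction B with
  | zero => simp
  | succ B ih =>
    rw [mul_add, mul_one, sum_range_succ, sum_range_succ, ih]
    simp only [zigzag]
    split_ifs <;> omega

theorem sum_range_ite_one_zigzag (s A : ℕ) (hA : 1 ≤ A) (x : ℤ) :
    ∑ m ∈ range (2 * A), (if m = 1 then x else zigzag s m) = x + s := by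
  calc ∑ m ∈ range (2 * A), (if m = 1 then x else zigzag s m)
      = ∑ m ∈ range (2 * A), (zigzag s m + if m = 1 then x + s else 0) := by
        refine sum_congr rfl fun m _ ↦ ?_
        simp only [zigzag]
        split_ifs <;> omega
    _ = x + s := by
        rw [sum_add_distrib, sum_range_zigzag, sum_ite_eq', if_pos (by simp; omega), zero_add]

section seq2

variable {j a b : ℕ} {i : Fin (j + 2)}

theorem seq2_of_lt (h : (i : ℕ) < j) : seq2 j a b i = 0 := if_pos h

theorem seq2_of_eq (h : (i : ℕ) = j) : seq2 j a b i = a := by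
  simp [seq2, h]

theorem seq2_of_gt (h : j < (i : ℕ)) : seq2 j a b i = b := by
  simp [seq2, h.ne', h.not_gt]

theorem sum_seq2 (j a b : ℕ) : ∑ i, seq2 j a b i = a + b := by
  rw [Fin.sum_univ_castSucc, Fin.sum_univ_castSucc, sum_eq_zero fun i _ ↦ seq2_of_lt (by simp)]
  simp [seq2_of_eq, seq2_of_gt]

theorem cases_of_lt_seq2 {m : ℕ} (hm : m < seq2 j a b i) :
    (i : ℕ) = j ∧ m < a ∨ (i : ℕ) = j + 1 ∧ m < b := by
  have := i.isLt
  rcases lt_trichotomy (i : ℕ) j with hi | hi | hi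
  · rw [seq2_of_lt hi] at hm; omega
  · rw [seq2_of_eq hi] at hm; omega
  · rw [seq2_of_gt hi] at hm; omega

end seq2

section Labeling

variable {j a b : ℕ}

def maxEdgeLabel (j a b : ℕ) : ℕ := (j + 1 + a + b) / 2

def childLabel (j a b i : ℕ) : ℤ :=
  if i + 1 < j then zigzag ((a + b) / 2 + 1) i
  else if i + 1 = j then -1
  else if i = j then maxEdgeLabel j a b + 1
  else -maxEdgeLabel j a b

def leafLabel (j a b i m : ℕ) : ℤ :=
  if i = j then (if m = 1 then (maxEdgeLabel j a b : ℤ) else zigzag 1 m)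
  else zigzag (a / 2 + 1) m

theorem childLabel_self : childLabel j a b j = maxEdgeLabel j a b + 1 := by
  simp [childLabel]

def vertexLabel (j a b : ℕ) : RTVertex (j + 2) (seq2 j a b) → ℤ
  | none => -(maxEdgeLabel j a b + 1)
  | some (.inl i) => childLabel j a b i
  | some (.inr ⟨i, m⟩) => leafLabel j a b i m

def edgeLabel (j a b : ℕ) : RTEdge (j + 2) (seq2 j a b) → ℤ :=
  Function.update (fun e ↦ vertexLabel j a b (some e)) (.inl ⟨j, by omega⟩) 0

theorem edgeLabel_inl (i : Fin (j + 2)) :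
    edgeLabel j a b (.inl i) = if (i : ℕ) = j then 0 else childLabel j a b i := by
  simp [edgeLabel, Function.update_apply, Fin.ext_iff, vertexLabel]

theorem sum_childLabel (hj : Odd j) :
    ∑ i ∈ range (j + 2), (if i = j then 0 else childLabel j a b i)
      = -(maxEdgeLabel j a b + 1) := by
  obtain ⟨c, rfl⟩ := hj
  have hzigzag :
      ∑ i ∈ range (2 * c), (if i = 2 * c + 1 then 0 else childLabel (2 * c + 1) a b i)
        = ∑ i ∈ range (2 * c), zigzag ((a + b) / 2 + 1) i :=
    sum_congr rfl fun i hi ↦ by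
      rw [mem_range] at hi
      rw [if_neg (by omega), childLabel, if_pos (by omega)]
  rw [sum_range_succ, sum_range_succ, sum_range_succ, hzigzag, sum_range_zigzag]
  simp only [childLabel]
  split_ifs <;> omega

theorem vertexSum_edgeLabel (hj : Odd j) (ha : Even a) (hb : Even b) (ha2 : 2 ≤ a) :
    vertexSum (seq2 j a b) (edgeLabel j a b) = vertexLabel j a b := by
  funext v
  rcases v with _ | i | ⟨i, m⟩
  · simp only [vertexSum, vertexLabel, edgeLabel_inl]
    rw [← sum_childLabel (b := b) hj, ← Fin.sum_univ_eq_sum_range]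
  · have hleaves : ∑ m, edgeLabel j a b (.inr ⟨i, m⟩)
        = ∑ m ∈ range (seq2 j a b i), leafLabel j a b i m :=
      Fin.sum_univ_eq_sum_range (leafLabel j a b i) _
    simp only [vertexSum, vertexLabel, hleaves, edgeLabel_inl]
    rcases lt_trichotomy (i : ℕ) j with hi | hi | hi
    · simp [seq2_of_lt hi, hi.ne]
    · obtain ⟨A, rfl⟩ := ha
      rw [seq2_of_eq hi, if_pos hi, ← two_mul]
      simp only [leafLabel, if_pos hi]
      rw [sum_range_ite_one_zigzag 1 A (by omega), hi, childLabel_self]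
      push_cast
      ring
    · obtain ⟨B, rfl⟩ := hb
      rw [seq2_of_gt hi, if_neg hi.ne', ← two_mul]
      simp only [leafLabel, if_neg hi.ne']
      rw [sum_range_zigzag, add_zero]
  · rfl

theorem vertexLabel_injective (hj : Odd j) (ha : Even a) (hb : Even b) (ha2 : 2 ≤ a) :
    Function.Injective (vertexLabel j a b) := by
  obtain ⟨c, rfl⟩ := hj; obtain ⟨A, rfl⟩ := ha; obtain ⟨B, rfl⟩ := hb
  rintro (_ | i | ⟨i, m⟩) (_ | i' | ⟨i', m'⟩) h <;>
    simp only [vertexLabel, childLabel, leafLabel, zigzag, maxEdgeLabel] at h <;>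
    simp only [reduceCtorEq, Option.some.injEq, Sum.inl.injEq, Sum.inr.injEq, Fin.ext_iff,
      Sigma.fin_mk_inj_iff]
  · split_ifs at h <;> omega
  · rcases cases_of_lt_seq2 m'.isLt with ⟨h1, h2⟩ | ⟨h1, h2⟩ <;> split_ifs at h <;> omega
  · split_ifs at h <;> omega
  · have := i.isLt; have := i'.isLt
    split_ifs at h <;> omega
  · have := i.isLt
    rcases cases_of_lt_seq2 m'.isLt with ⟨h1, h2⟩ | ⟨h1, h2⟩ <;> split_ifs at h <;> omega
  · rcases cases_of_lt_seq2 m.isLt with ⟨h1, h2⟩ | ⟨h1, h2⟩ <;> split_ifs at h <;> omega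
  · have := i'.isLt
    rcases cases_of_lt_seq2 m.isLt with ⟨h1, h2⟩ | ⟨h1, h2⟩ <;> split_ifs at h <;> omega
  · rcases cases_of_lt_seq2 m.isLt with ⟨h1, h2⟩ | ⟨h1, h2⟩ <;>
      rcases cases_of_lt_seq2 m'.isLt with ⟨h1', h2'⟩ | ⟨h1', h2'⟩ <;> split_ifs at h <;> omega

theorem vertexLabel_ne_zero (ha2 : 2 ≤ a) (v : RTVertex (j + 2) (seq2 j a b)) :
    vertexLabel j a b v ≠ 0 := by
  rcases v with _ | i | ⟨i, m⟩ <;>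
    simp only [vertexLabel, childLabel, leafLabel, zigzag, maxEdgeLabel] <;>
    (try split_ifs) <;> omega

theorem abs_vertexLabel_some_le (hj : Odd j) (ha : Even a) (hb : Even b)
    {e : RTEdge (j + 2) (seq2 j a b)} (he : e ≠ .inl ⟨j, by omega⟩) :
    |vertexLabel j a b (some e)| ≤ maxEdgeLabel j a b := by
  obtain ⟨c, rfl⟩ := hj; obtain ⟨A, rfl⟩ := ha; obtain ⟨B, rfl⟩ := hb
  rw [abs_le]
  rcases e with i | ⟨i, m⟩
  · have := i.isLt
    have hi : (i : ℕ) ≠ 2 * c + 1 := fun hi ↦ he (congrArg _ (Fin.ext hi))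
    simp only [vertexLabel, childLabel, zigzag, maxEdgeLabel]
    split_ifs <;> omega
  · simp only [vertexLabel, leafLabel, zigzag, maxEdgeLabel]
    rcases cases_of_lt_seq2 m.isLt with ⟨h1, h2⟩ | ⟨h1, h2⟩ <;> split_ifs <;> omega

theorem edgeLabel_injective (hj : Odd j) (ha : Even a) (hb : Even b) (ha2 : 2 ≤ a) :
    Function.Injective (edgeLabel j a b) :=
  ((vertexLabel_injective hj ha hb ha2).comp (Option.some_injective _)).update_of_forall_ne _
    fun e ↦ vertexLabel_ne_zero ha2 (some e)

theorem edgeLabel_mem_segSet (hj : Odd j) (ha : Even a) (hb : Even b)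
    (e : RTEdge (j + 2) (seq2 j a b)) :
    edgeLabel j a b e ∈ segSet (j + 2 + ∑ i, seq2 j a b i) := by
  have hq : (j + a + b) % 2 = 1 := Nat.odd_iff.mp ((hj.add_even ha).add_even hb)
  have hK : (j + 2 + (a + b)) / 2 = maxEdgeLabel j a b := by unfold maxEdgeLabel; omega
  rw [mem_segSet_iff, sum_seq2, hK]
  refine ⟨by omega, ?_⟩
  by_cases he : e = .inl ⟨j, by omega⟩
  · simp [edgeLabel, he]
  · simpa [edgeLabel, Function.update_apply, he] using abs_vertexLabel_some_le hj ha hb he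

theorem vertexLabel_mem_segSet (hj : Odd j) (ha : Even a) (hb : Even b) (ha2 : 2 ≤ a)
    (v : RTVertex (j + 2) (seq2 j a b)) :
    vertexLabel j a b v ∈ segSet (j + 2 + ∑ i, seq2 j a b i + 1) := by
  have hq : (j + a + b) % 2 = 1 := Nat.odd_iff.mp ((hj.add_even ha).add_even hb)
  have hK : (j + 2 + (a + b) + 1) / 2 = maxEdgeLabel j a b + 1 := by
    unfold maxEdgeLabel; omega
  rw [mem_segSet_iff, sum_seq2, hK]
  refine ⟨fun _ ↦ vertexLabel_ne_zero ha2 v, ?_⟩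
  push_cast
  have hmax : |(maxEdgeLabel j a b : ℤ) + 1| ≤ maxEdgeLabel j a b + 1 :=
    (abs_of_nonneg (by positivity)).le
  rcases v with _ | e
  · simpa only [vertexLabel, abs_neg] using hmax
  by_cases he : e = .inl ⟨j, by omega⟩
  · simpa only [he, vertexLabel, childLabel_self] using hmax
  · linarith [abs_vertexLabel_some_le hj ha hb he]

end Labeling

theorem stmt4_general (j a b : ℕ) (hj : Odd j) (ha : Even a) (hb : Even b)
    (ha2 : 2 ≤ a) : IsSEG (seq2 j a b) := by
  have hsum := vertexSum_edgeLabel hj ha hb ha2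
  exact isSEG_of_injective (edgeLabel_injective hj ha hb ha2) (edgeLabel_mem_segSet hj ha hb)
    (hsum ▸ vertexLabel_injective hj ha hb ha2) (hsum ▸ vertexLabel_mem_segSet hj ha hb ha2)

/-- For every odd integer `j ≥ 1` and all even integers `a, b` with `2 ≤ a ≤ b`, the
rooted tree `RT(0^j, a, b)` is super edge-graceful. -/
theorem stmt4 (j a b : ℕ) (hj : Odd j) (hj1 : 1 ≤ j) (ha : Even a) (hb : Even b)
    (ha2 : 2 ≤ a) (hab : a ≤ b) : IsSEG (seq2 j a b) :=
  stmt4_general j a b hj ha hb ha2
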